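/- Fix l, m ≥ 1 and set n = l + m. For each k ∈ {4, 14}: (i) the map θ_{l,m} sends the dynamical Lie algebra 𝔞_k^{K_n} of the complete graph K_n into itself; and (ii) every element g of the dynamical Lie algebra 𝔞_k^{K_{l,m}} of the complete bipartite graph K_{l,m} satisfies θ_{l,m}(g) = g. Consequently 𝔞_k^{K_{l,m}} ⊆ (𝔞_k^{K_n})^{θ_{l,m}}. -/

import Mathlib

/-! `θ_{l,m}` is a Lie algebra automorphism (transposition reverses products and
`Q_{l,m}² = 1`), so it suffices to look at generators. Since `a ↦ Y aᵀ Y` negates both `X`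
and `Y` while `a ↦ X aᵀ X` fixes both, `θ_{l,m}(a_p b_q) = -σ_p σ_q · a_p b_q` for
`a, b ∈ {X, Y}`, where `σ_i = -1` on the first `l` qubits and `σ_i = 1` on the others. So
`θ_{l,m}` maps every generator of `𝔞_k^G` to `±` itself, and fixes those of `K_{l,m}`, whose
edges join the two parts. -/

open Matrix DirectSum

attribute [local instance 100] LieRing.ofAssociativeRing

noncomputable section

/-- The identity Pauli matrix `I`. -/
def PauliI : Matrix (Fin 2) (Fin 2) ℂ := 1

/-- The Pauli matrix `X`. -/
def PauliX : Matrix (Fin 2) (Fin 2) ℂ := !![0, 1; 1, 0]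

/-- The Pauli matrix `Y`. -/
def PauliY : Matrix (Fin 2) (Fin 2) ℂ := !![0, -Complex.I; Complex.I, 0]

/-- The Pauli matrix `Z`. -/
def PauliZ : Matrix (Fin 2) (Fin 2) ℂ := !![1, 0; 0, -1]

/-- The `n`-fold Kronecker product of the 2×2 matrices `A 0, …, A (n-1)`, realized as a
matrix indexed by `Fin n → Fin 2` (a type of cardinality `2^n`). -/
def pauliString {n : ℕ} (A : Fin n → Matrix (Fin 2) (Fin 2) ℂ) :
    Matrix (Fin n → Fin 2) (Fin n → Fin 2) ℂ :=
  Matrix.of fun x y => ∏ k, A k (x k) (y k)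

/-- The Pauli string `A_i B_j` with `A` at site `i`, `B` at site `j`, and identity elsewhere. -/
def twoLocal {n : ℕ} (A B : Matrix (Fin 2) (Fin 2) ℂ) (i j : Fin n) :
    Matrix (Fin n → Fin 2) (Fin n → Fin 2) ℂ :=
  pauliString (fun k => if k = i then A else if k = j then B else PauliI)

/-- The Pauli string `A_i` with `A` at site `i` and identity elsewhere. -/
def oneLocal {n : ℕ} (A : Matrix (Fin 2) (Fin 2) ℂ) (i : Fin n) :
    Matrix (Fin n → Fin 2) (Fin n → Fin 2) ℂ :=
  pauliString (fun k => if k = i then A else PauliI)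

/-- The generating sets `𝒜_k` (a pair `(a, b)` stands for `a ⊗ b`). -/
def genSet : ℕ → Set (Matrix (Fin 2) (Fin 2) ℂ × Matrix (Fin 2) (Fin 2) ℂ)
  | 2 => {(PauliX, PauliY), (PauliY, PauliX)}
  | 4 => {(PauliX, PauliX), (PauliY, PauliY)}
  | 6 => {(PauliX, PauliX), (PauliY, PauliZ), (PauliZ, PauliY)}
  | 7 => {(PauliX, PauliX), (PauliY, PauliY), (PauliZ, PauliZ)}
  | 14 => {(PauliX, PauliX), (PauliY, PauliY), (PauliX, PauliY), (PauliY, PauliX)}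
  | 16 => {(PauliX, PauliY), (PauliY, PauliX), (PauliY, PauliZ), (PauliZ, PauliY)}
  | 20 => {(PauliX, PauliX), (PauliY, PauliY), (PauliY, PauliZ), (PauliZ, PauliY)}
  | 22 => {(PauliX, PauliX), (PauliX, PauliY), (PauliY, PauliX), (PauliX, PauliZ), (PauliZ, PauliX)}
  | _ => ∅

/-- The dynamical Lie algebra `𝔞_k^G`: the smallest real Lie subalgebra of the `2^n × 2^n`
complex matrices containing `i·(a_i · b_j)` for every edge `{i, j}` of `G` and every pair
`(a, b)` with `a ⊗ b ∈ 𝒜_k`. -/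
def dla (k : ℕ) {n : ℕ} (G : SimpleGraph (Fin n)) :
    LieSubalgebra ℝ (Matrix (Fin n → Fin 2) (Fin n → Fin 2) ℂ) :=
  LieSubalgebra.lieSpan ℝ _
    {M | ∃ i j : Fin n, G.Adj i j ∧ ∃ p ∈ genSet k, M = Complex.I • twoLocal p.1 p.2 i j}

lemma pauliString_mul {n : ℕ} (A B : Fin n → Matrix (Fin 2) (Fin 2) ℂ) :
    pauliString A * pauliString B = pauliString (fun k => A k * B k) := by
  ext x y
  simp only [pauliString, Matrix.mul_apply, Matrix.of_apply, ← Finset.prod_mul_distrib]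
  rw [Fintype.prod_sum (fun k t => A k (x k) t * B k t (y k))]

lemma pauliString_one {n : ℕ} :
    pauliString (fun _ : Fin n => (1 : Matrix (Fin 2) (Fin 2) ℂ)) = 1 := by
  ext x y
  simp only [pauliString, Matrix.of_apply, Matrix.one_apply]
  by_cases h : x = y
  · subst h; simp
  · rw [if_neg h]
    obtain ⟨k, hk⟩ := Function.ne_iff.mp h
    exact Finset.prod_eq_zero (Finset.mem_univ k) (if_neg hk)

lemma PauliX_mul_self : PauliX * PauliX = 1 := by
  ext i j
  fin_cases i <;> fin_cases j <;>
    simp [PauliX, Matrix.mul_apply, Fin.sum_univ_two, Matrix.one_apply]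

lemma PauliY_mul_self : PauliY * PauliY = 1 := by
  ext i j
  fin_cases i <;> fin_cases j <;>
    simp [PauliY, Matrix.mul_apply, Fin.sum_univ_two, Matrix.one_apply]

/-- The Pauli string `Q_{l,m} = Y^{⊗l} ⊗ X^{⊗m}` on `l + m` qubits. -/
def Qlm (l m : ℕ) : Matrix (Fin (l + m) → Fin 2) (Fin (l + m) → Fin 2) ℂ :=
  pauliString (fun i => if (i : ℕ) < l then PauliY else PauliX)

lemma Qlm_mul_self (l m : ℕ) : Qlm l m * Qlm l m = 1 := by
  rw [Qlm, pauliString_mul]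
  rw [show (fun k : Fin (l + m) => (if (k : ℕ) < l then PauliY else PauliX) *
      (if (k : ℕ) < l then PauliY else PauliX)) = fun _ => (1 : Matrix (Fin 2) (Fin 2) ℂ) from ?_,
    pauliString_one]
  funext k
  by_cases h : (k : ℕ) < l
  · simp [h, PauliY_mul_self]
  · simp [h, PauliX_mul_self]

/-- The involution `θ_{l,m}(g) = -Q_{l,m} · gᵀ · Q_{l,m}`. -/
def pauliTheta (l m : ℕ) (g : Matrix (Fin (l + m) → Fin 2) (Fin (l + m) → Fin 2) ℂ) :
    Matrix (Fin (l + m) → Fin 2) (Fin (l + m) → Fin 2) ℂ :=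
  -(Qlm l m * gᵀ * Qlm l m)

lemma pauliTheta_add (l m : ℕ) (a b : Matrix (Fin (l + m) → Fin 2) (Fin (l + m) → Fin 2) ℂ) :
    pauliTheta l m (a + b) = pauliTheta l m a + pauliTheta l m b := by
  simp only [pauliTheta, transpose_add, mul_add, add_mul, neg_add]

lemma pauliTheta_smul (l m : ℕ) (r : ℝ)
    (a : Matrix (Fin (l + m) → Fin 2) (Fin (l + m) → Fin 2) ℂ) :
    pauliTheta l m (r • a) = r • pauliTheta l m a := by
  simp [pauliTheta, transpose_smul, mul_smul_comm, smul_mul_assoc]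

lemma Qlm_sandwich (l m : ℕ) (x y : Matrix (Fin (l + m) → Fin 2) (Fin (l + m) → Fin 2) ℂ) :
    (Qlm l m * x * Qlm l m) * (Qlm l m * y * Qlm l m) = Qlm l m * (x * y) * Qlm l m := by
  have hQ := Qlm_mul_self l m
  calc (Qlm l m * x * Qlm l m) * (Qlm l m * y * Qlm l m)
      = Qlm l m * x * ((Qlm l m * Qlm l m) * (y * Qlm l m)) := by
        simp only [mul_assoc]
    _ = Qlm l m * (x * y) * Qlm l m := by
        rw [hQ, one_mul]; simp only [mul_assoc]

lemma pauliTheta_lie (l m : ℕ) (a b : Matrix (Fin (l + m) → Fin 2) (Fin (l + m) → Fin 2) ℂ) :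
    pauliTheta l m ⁅a, b⁆ = ⁅pauliTheta l m a, pauliTheta l m b⁆ := by
  simp only [pauliTheta, Ring.lie_def, transpose_sub, transpose_mul, neg_mul_neg,
    mul_sub, sub_mul, neg_sub]
  rw [Qlm_sandwich, Qlm_sandwich]

/-- The complete bipartite graph `K_{l,m}` on `{1, …, l + m}`, with parts `{1, …, l}` and
`{l + 1, …, l + m}`. -/
def Kbip (l m : ℕ) : SimpleGraph (Fin (l + m)) :=
  SimpleGraph.fromRel (fun i j => (i : ℕ) < l ∧ l ≤ (j : ℕ))

lemma pauliString_transpose {n : ℕ} (A : Fin n → Matrix (Fin 2) (Fin 2) ℂ) :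
    (pauliString A)ᵀ = pauliString (fun k => (A k)ᵀ) := by
  ext x y
  simp [pauliString]

lemma pauliString_smul {n : ℕ} (c : Fin n → ℂ) (A : Fin n → Matrix (Fin 2) (Fin 2) ℂ) :
    pauliString (fun k => c k • A k) = (∏ k, c k) • pauliString A := by
  ext x y
  simp [pauliString, Finset.prod_mul_distrib]

lemma pauliString_mul_transpose_mul {n : ℕ} (A B : Fin n → Matrix (Fin 2) (Fin 2) ℂ) :
    pauliString B * (pauliString A)ᵀ * pauliString B =
      pauliString (fun k => B k * (A k)ᵀ * B k) := by
  rw [pauliString_transpose, pauliString_mul, pauliString_mul]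

lemma PauliX_transpose : PauliXᵀ = PauliX := by
  ext i j; fin_cases i <;> fin_cases j <;> simp [PauliX]

lemma PauliY_transpose : PauliYᵀ = -PauliY := by
  ext i j; fin_cases i <;> fin_cases j <;> simp [PauliY]

lemma PauliY_mul_PauliX_mul_PauliY : PauliY * PauliX * PauliY = -PauliX := by
  ext i j
  fin_cases i <;> fin_cases j <;> simp [PauliX, PauliY, Matrix.mul_apply, Fin.sum_univ_two]

lemma PauliX_mul_PauliY_mul_PauliX : PauliX * PauliY * PauliX = -PauliY := by
  ext i j
  fin_cases i <;> fin_cases j <;> simp [PauliX, PauliY, Matrix.mul_apply, Fin.sum_univ_two]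

def pauliXY : Set (Matrix (Fin 2) (Fin 2) ℂ) := {PauliX, PauliY}

lemma genSet_subset_pauliXY {k : ℕ} (hk : k ∈ ({4, 14} : Set ℕ)) :
    genSet k ⊆ pauliXY ×ˢ pauliXY := by
  rcases hk with rfl | rfl <;> simp [genSet, pauliXY, Set.insert_subset_iff]

lemma PauliY_mul_transpose_mul_PauliY {a : Matrix (Fin 2) (Fin 2) ℂ} (ha : a ∈ pauliXY) :
    PauliY * aᵀ * PauliY = -a := by
  rcases ha with rfl | rfl
  · rw [PauliX_transpose, PauliY_mul_PauliX_mul_PauliY]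
  · rw [PauliY_transpose, mul_neg, neg_mul, PauliY_mul_self, one_mul]

lemma PauliX_mul_transpose_mul_PauliX {a : Matrix (Fin 2) (Fin 2) ℂ} (ha : a ∈ pauliXY) :
    PauliX * aᵀ * PauliX = a := by
  rcases ha with rfl | rfl
  · rw [PauliX_transpose, PauliX_mul_self, one_mul]
  · rw [PauliY_transpose, mul_neg, neg_mul, PauliX_mul_PauliY_mul_PauliX, neg_neg]

def qlmFactor (l : ℕ) {n : ℕ} (i : Fin n) : Matrix (Fin 2) (Fin 2) ℂ :=
  if (i : ℕ) < l then PauliY else PauliX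

lemma Qlm_eq_pauliString (l m : ℕ) : Qlm l m = pauliString (qlmFactor l) := rfl

def qlmSign (l : ℕ) {n : ℕ} (i : Fin n) : ℂ :=
  if (i : ℕ) < l then -1 else 1

lemma qlmFactor_mul_transpose_mul {l n : ℕ} (i : Fin n) {a : Matrix (Fin 2) (Fin 2) ℂ}
    (ha : a ∈ pauliXY) : qlmFactor l i * aᵀ * qlmFactor l i = qlmSign l i • a := by
  unfold qlmFactor qlmSign
  split_ifs
  · rw [PauliY_mul_transpose_mul_PauliY ha, neg_one_smul]
  · rw [PauliX_mul_transpose_mul_PauliX ha, one_smul]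

lemma qlmFactor_mul_self {l n : ℕ} (i : Fin n) : qlmFactor l i * qlmFactor l i = 1 := by
  unfold qlmFactor
  split_ifs
  exacts [PauliY_mul_self, PauliX_mul_self]

lemma Qlm_mul_twoLocal_transpose_mul_Qlm {l m : ℕ} {a b : Matrix (Fin 2) (Fin 2) ℂ}
    (ha : a ∈ pauliXY) (hb : b ∈ pauliXY) {p q : Fin (l + m)} (hpq : p ≠ q) :
    Qlm l m * (twoLocal a b p q)ᵀ * Qlm l m =
      (qlmSign l p * qlmSign l q) • twoLocal a b p q := by
  set s : Fin (l + m) → ℂ :=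
    fun k => if k = p then qlmSign l p else if k = q then qlmSign l q else 1
  have hsite : ∀ k, qlmFactor l k * (if k = p then a else if k = q then b else PauliI)ᵀ *
      qlmFactor l k = s k • (if k = p then a else if k = q then b else PauliI) := by
    intro k
    by_cases hkp : k = p
    · subst hkp; simp [s, qlmFactor_mul_transpose_mul k ha]
    by_cases hkq : k = q
    · subst hkq; simp [s, hkp, qlmFactor_mul_transpose_mul k hb]
    · simp [s, hkp, hkq, PauliI, qlmFactor_mul_self]
  have hprod : ∏ k, s k = qlmSign l p * qlmSign l q :=
    (Fintype.prod_eq_mul p q hpq fun k hk => by simp [s, hk.1, hk.2]).trans (by simp [s, hpq.symm])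
  rw [Qlm_eq_pauliString, twoLocal, pauliString_mul_transpose_mul]
  simp only [hsite, pauliString_smul, hprod]

lemma pauliTheta_complex_smul (l m : ℕ) (c : ℂ)
    (a : Matrix (Fin (l + m) → Fin 2) (Fin (l + m) → Fin 2) ℂ) :
    pauliTheta l m (c • a) = c • pauliTheta l m a := by
  simp [pauliTheta]

lemma pauliTheta_twoLocal {l m : ℕ} {a b : Matrix (Fin 2) (Fin 2) ℂ} (ha : a ∈ pauliXY)
    (hb : b ∈ pauliXY) {p q : Fin (l + m)} (hpq : p ≠ q) :
    pauliTheta l m (twoLocal a b p q) =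
      if ((p : ℕ) < l ↔ (q : ℕ) < l) then -twoLocal a b p q else twoLocal a b p q := by
  rw [pauliTheta, Qlm_mul_twoLocal_transpose_mul_Qlm ha hb hpq]
  by_cases hp : (p : ℕ) < l <;> by_cases hq : (q : ℕ) < l <;> simp [qlmSign, hp, hq]

def pauliThetaHom (l m : ℕ) :
    Matrix (Fin (l + m) → Fin 2) (Fin (l + m) → Fin 2) ℂ →ₗ⁅ℝ⁆
      Matrix (Fin (l + m) → Fin 2) (Fin (l + m) → Fin 2) ℂ where
  toFun := pauliTheta l m
  map_add' := pauliTheta_add l m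
  map_smul' := pauliTheta_smul l m
  map_lie' := pauliTheta_lie l m _ _

def LieHom.fixedLieSubalgebra {R L : Type*} [CommRing R] [LieRing L] [LieAlgebra R L]
    (f : L →ₗ⁅R⁆ L) : LieSubalgebra R L where
  carrier := {x | f x = x}
  add_mem' hx hy := by simp_all
  zero_mem' := map_zero f
  smul_mem' c x hx := by simp_all
  lie_mem' hx hy := by simp_all

lemma dla_mono (k : ℕ) {n : ℕ} {G H : SimpleGraph (Fin n)} (hGH : G ≤ H) :
    dla k G ≤ dla k H :=
  LieSubalgebra.lieSpan_mono fun _ ⟨i, j, hij, p, hp, hM⟩ => ⟨i, j, hGH hij, p, hp, hM⟩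

lemma pauliTheta_mem_dla {k l m : ℕ} (hk : genSet k ⊆ pauliXY ×ˢ pauliXY)
    (G : SimpleGraph (Fin (l + m))) {g : Matrix (Fin (l + m) → Fin 2) (Fin (l + m) → Fin 2) ℂ}
    (hg : g ∈ dla k G) : pauliTheta l m g ∈ dla k G := by
  suffices dla k G ≤ (dla k G).comap (pauliThetaHom l m) from this hg
  rw [dla, LieSubalgebra.lieSpan_le]
  rintro _ ⟨i, j, hij, p, hp, rfl⟩
  have hgen : Complex.I • twoLocal p.1 p.2 i j ∈ dla k G :=
    LieSubalgebra.subset_lieSpan ⟨i, j, hij, p, hp, rfl⟩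
  change pauliTheta l m _ ∈ dla k G
  rw [pauliTheta_complex_smul, pauliTheta_twoLocal (hk hp).1 (hk hp).2 hij.ne]
  split_ifs
  · rw [smul_neg]; exact neg_mem hgen
  · exact hgen

lemma dla_Kbip_le_fixedLieSubalgebra {k l m : ℕ} (hk : genSet k ⊆ pauliXY ×ˢ pauliXY) :
    dla k (Kbip l m) ≤ (pauliThetaHom l m).fixedLieSubalgebra := by
  rw [dla, LieSubalgebra.lieSpan_le]
  rintro _ ⟨i, j, hij, p, hp, rfl⟩
  have hcross : ¬((i : ℕ) < l ↔ (j : ℕ) < l) := by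
    simp only [Kbip, SimpleGraph.fromRel_adj] at hij
    omega
  change pauliTheta l m _ = _
  rw [pauliTheta_complex_smul, pauliTheta_twoLocal (hk hp).1 (hk hp).2 hij.ne, if_neg hcross]

theorem dla_Kbip_subset_fixed_general (l m : ℕ)
    (k : ℕ) (hk : k ∈ ({4, 14} : Set ℕ)) :
    (∀ g ∈ dla k (⊤ : SimpleGraph (Fin (l + m))),
        pauliTheta l m g ∈ dla k (⊤ : SimpleGraph (Fin (l + m)))) ∧
    (∀ g ∈ dla k (Kbip l m), pauliTheta l m g = g) ∧
    (∀ g ∈ dla k (Kbip l m),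
        g ∈ dla k (⊤ : SimpleGraph (Fin (l + m))) ∧ pauliTheta l m g = g) := by
  have hXY := genSet_subset_pauliXY hk
  have hfixed : ∀ g ∈ dla k (Kbip l m), pauliTheta l m g = g := fun _ hg =>
    dla_Kbip_le_fixedLieSubalgebra hXY hg
  exact ⟨fun _ => pauliTheta_mem_dla hXY ⊤, hfixed,
    fun g hg => ⟨dla_mono k le_top hg, hfixed g hg⟩⟩

/-- For `k ∈ {4, 14}`: the involution `θ_{l,m}` maps `𝔞_k^{K_n}` into
itself; every element of `𝔞_k^{K_{l,m}}` is fixed by `θ_{l,m}`; consequently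
`𝔞_k^{K_{l,m}} ⊆ (𝔞_k^{K_n})^{θ_{l,m}}`. -/
theorem dla_Kbip_subset_fixed (l m : ℕ) (hl : 1 ≤ l) (hm : 1 ≤ m)
    (k : ℕ) (hk : k ∈ ({4, 14} : Set ℕ)) :
    (∀ g ∈ dla k (⊤ : SimpleGraph (Fin (l + m))),
        pauliTheta l m g ∈ dla k (⊤ : SimpleGraph (Fin (l + m)))) ∧
    (∀ g ∈ dla k (Kbip l m), pauliTheta l m g = g) ∧
    (∀ g ∈ dla k (Kbip l m),
        g ∈ dla k (⊤ : SimpleGraph (Fin (l + m))) ∧ pauliTheta l m g = g) :=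
  dla_Kbip_subset_fixed_general l m k hk
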